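/- Assume the hierarchy S is well-formed. Then for all x, y, z in the extended hierarchy, join(x, y) ≤ z if and only if x ≤ z and y ≤ z. -/

import Mathlib

/-- Minimal common subclasses of `a` and `b`: the minimal elements of the set
`{c | a ≤ c ∧ b ≤ c}` of common upper bounds of `a` and `b`. -/
def mcs {S : Type*} [PartialOrder S] (a b : S) : Set S :=
  {c | Minimal (fun c => a ≤ c ∧ b ≤ c) c}

open Classical in
/-- The join operator on the extended hierarchy `WithTop S`:
`join a b = c` if `a, b ∈ S` and `mcs a b = {c}`, and `⊤` otherwise. -/
noncomputable def hjoin {S : Type*} [PartialOrder S] : WithTop S → WithTop S → WithTop S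
  | some a, some b => if h : ∃ c, mcs a b = {c} then some h.choose else ⊤
  | _, _ => ⊤

/-!
In a well-founded order every common upper bound of `a` and `b` lies above a minimal one.
So when `mcs a b` has at most one element, either `a` and `b` have no common upper bound in `S`,
and `⊤` is their least upper bound in `WithTop S`, or `mcs a b = {c}` and `c` is their least
upper bound. Either way `hjoin x y` is the least upper bound of `x` and `y` in `WithTop S`.
-/

open Set

section mcs

variable {S : Type*} [PartialOrder S] {a b c z : S}

theorem mcs_eq_setOf_minimal_upperBounds (a b : S) :
    mcs a b = {c | Minimal (· ∈ upperBounds {a, b}) c} := by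
  simp [mcs, upperBounds_insert, upperBounds_singleton]

theorem IsLUB.mcs_eq (h : IsLUB {a, b} c) : mcs a b = {c} := by
  ext x
  rw [mcs_eq_setOf_minimal_upperBounds, mem_ofPred_eq, h.minimal_iff, mem_singleton_iff]

open Classical in
theorem hjoin_coe_coe (a b : S) :
    hjoin (a : WithTop S) b = if h : ∃ c, mcs a b = {c} then (h.choose : WithTop S) else ⊤ :=
  rfl

theorem hjoin_coe_coe_of_isLUB (h : IsLUB {a, b} c) : hjoin (a : WithTop S) b = c := by
  have hex : ∃ c, mcs a b = {c} := ⟨c, h.mcs_eq⟩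
  rw [hjoin_coe_coe, dif_pos hex, WithTop.coe_inj]
  exact singleton_injective (hex.choose_spec.symm.trans h.mcs_eq)

theorem isLUB_coe_pair (h : IsLUB {a, b} c) :
    IsLUB {(a : WithTop S), (b : WithTop S)} (c : WithTop S) := by
  refine ⟨by simpa [upperBounds_insert] using h.1, fun z hz => ?_⟩
  induction z using WithTop.recTopCoe with
  | top => exact le_top
  | coe z => simpa [upperBounds_insert] using h.2 (by simpa [upperBounds_insert] using hz)

variable [WellFoundedLT S]

theorem exists_mem_mcs_le (ha : a ≤ z) (hb : b ≤ z) : ∃ c ∈ mcs a b, c ≤ z := by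
  obtain ⟨c, hcz, hc⟩ := exists_minimal_le_of_wellFoundedLT (fun c => a ≤ c ∧ b ≤ c) z ⟨ha, hb⟩
  exact ⟨c, hc, hcz⟩

theorem isLUB_of_mcs_eq_singleton (h : mcs a b = {c}) : IsLUB {a, b} c := by
  have hc : c ∈ mcs a b := h ▸ rfl
  refine ⟨by simpa [upperBounds_insert] using hc.1, fun z hz => ?_⟩
  simp only [upperBounds_insert, upperBounds_singleton, mem_inter_iff, mem_Ici] at hz
  obtain ⟨m, hm, hmz⟩ := exists_mem_mcs_le hz.1 hz.2
  rw [h, mem_singleton_iff] at hm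
  exact hm ▸ hmz

theorem exists_isLUB_of_subsingleton_mcs (hwf : (mcs a b).Subsingleton) (ha : a ≤ z)
    (hb : b ≤ z) : ∃ c, IsLUB {a, b} c := by
  obtain ⟨m, hm, -⟩ := exists_mem_mcs_le ha hb
  exact ⟨m, isLUB_of_mcs_eq_singleton (hwf.eq_singleton_of_mem hm)⟩

theorem hjoin_coe_coe_of_forall_not_isLUB (h : ∀ c, ¬IsLUB {a, b} c) :
    hjoin (a : WithTop S) b = ⊤ := by
  have hex : ¬∃ c, mcs a b = {c} := fun ⟨c, hc⟩ => h c (isLUB_of_mcs_eq_singleton hc)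
  rw [hjoin_coe_coe, dif_neg hex]

end mcs

theorem isLUB_hjoin {S : Type*} [PartialOrder S] [WellFoundedLT S]
    (hwf : ∀ a b : S, (mcs a b).Subsingleton) (x y : WithTop S) :
    IsLUB {x, y} (hjoin x y) := by
  induction x using WithTop.recTopCoe with
  | top => exact IsGreatest.isLUB ⟨mem_insert _ _, fun _ _ => le_top⟩
  | coe a =>
  induction y using WithTop.recTopCoe with
  | top => exact IsGreatest.isLUB ⟨by simp [hjoin], fun _ _ => le_top⟩
  | coe b =>
  by_cases h : ∃ c, IsLUB {a, b} c
  · obtain ⟨c, hc⟩ := h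
    rw [hjoin_coe_coe_of_isLUB hc]
    exact isLUB_coe_pair hc
  · push Not at h
    rw [hjoin_coe_coe_of_forall_not_isLUB h]
    refine ⟨fun _ _ => le_top, fun z hz => ?_⟩
    induction z using WithTop.recTopCoe with
    | top => exact le_rfl
    | coe z =>
      simp only [upperBounds_insert, upperBounds_singleton, mem_inter_iff, mem_Ici,
        WithTop.coe_le_coe] at hz
      obtain ⟨c, hc⟩ := exists_isLUB_of_subsingleton_mcs (hwf a b) hz.1 hz.2
      exact absurd hc (h c)

/-- In a well-formed hierarchy, `join x y ≤ z` iff `x ≤ z` and `y ≤ z`. -/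
theorem hjoin_le_iff {S : Type*} [Fintype S] [PartialOrder S]
    (hwf : ∀ a b : S, (mcs a b).Subsingleton) (x y z : WithTop S) :
    hjoin x y ≤ z ↔ x ≤ z ∧ y ≤ z := by
  rw [isLUB_le_iff (isLUB_hjoin hwf x y)]
  simp [upperBounds_insert, upperBounds_singleton]
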